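/- arXiv:0710.0681 — 2 statements merged into one kernel-verified Lean document; each statement's English description precedes it below -/
import Mathlib

section
/- Let n > 1 and let ((n_1,k_1),...,(n_r,k_r)) be a sequence of pairs of integers with r ≥ 2 such that each n_i > 0, ∑ n_i = n, ∑ k_i = 0, and the ratios k_1/n_1 > k_2/n_2 > ... > k_r/n_r are strictly decreasing. Then ∑_{i>j} (n_i k_j − n_j k_i) ≥ n. -/
/-- Lemma 4.3, first inequality: for an admissible sequence of total rank `N` and total
Chern class `0` with at least two terms, `∑_{i>j} (n_i k_j - n_j k_i) ≥ N`. -/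
theorem stmt0 (N : ℤ) (hN : 1 < N) (r : ℕ) (hr : 2 ≤ r)
    (n k : Fin r → ℤ)
    (hpos : ∀ i, 0 < n i)
    (hsum_n : ∑ i, n i = N)
    (hsum_k : ∑ i, k i = 0)
    (hslope : StrictAnti (fun i : Fin r => (k i : ℚ) / (n i : ℚ))) :
    N ≤ ∑ i : Fin r, ∑ j ∈ Finset.univ.filter (fun j => j < i),
        (n i * k j - n j * k i) := by
  classical
  set i0 : Fin r := ⟨0, by omega⟩ with hi0
  -- cross multiplication of the slope inequality
  have hcross : ∀ i j : Fin r, j < i → n j * k i < n i * k j := by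
    intro i j hij
    have h := hslope hij
    have hnj : (0:ℚ) < (n j : ℚ) := by exact_mod_cast hpos j
    have hni : (0:ℚ) < (n i : ℚ) := by exact_mod_cast hpos i
    rw [div_lt_div_iff₀ hni hnj] at h
    have : ((n j * k i : ℤ) : ℚ) < ((n i * k j : ℤ) : ℚ) := by push_cast; linarith
    exact_mod_cast this
  have hne : ∀ i : Fin r, i ≠ i0 → i0 < i := by
    intro i h
    have hv : (i : ℕ) ≠ 0 := by
      intro hv; exact h (Fin.ext (by simp [hv, hi0]))
    exact Fin.lt_def.mpr (by simp [hi0]; omega)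
  have hmem0 : i0 ∈ (Finset.univ : Finset (Fin r)) := Finset.mem_univ _
  have hsum_erase_n : ∑ i ∈ Finset.univ.erase i0, n i = N - n i0 := by
    have h := Finset.add_sum_erase _ n hmem0
    rw [hsum_n] at h; linarith
  have hsum_erase_k : ∑ i ∈ Finset.univ.erase i0, k i = - k i0 := by
    have h := Finset.add_sum_erase _ k hmem0
    rw [hsum_k] at h; linarith
  -- positivity of k i0
  have hk0 : 0 < k i0 := by
    have hub : ∑ i ∈ Finset.univ.erase i0, (n i0 * k i)
        < ∑ i ∈ Finset.univ.erase i0, (n i * k i0) := by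
      apply Finset.sum_lt_sum_of_nonempty
      · refine ⟨⟨1, by omega⟩, Finset.mem_erase.mpr ⟨?_, Finset.mem_univ _⟩⟩
        intro h; simpa [hi0, Fin.ext_iff] using h
      · intro i hi
        exact hcross i i0 (hne i (Finset.mem_erase.mp hi).1)
    rw [← Finset.mul_sum, hsum_erase_k, ← Finset.sum_mul, hsum_erase_n] at hub
    nlinarith
  -- lower bound each inner sum by its j = i0 term
  have hlb : ∀ i : Fin r,
      (if i0 < i then n i * k i0 - n i0 * k i else 0) ≤
      ∑ j ∈ Finset.univ.filter (fun j => j < i), (n i * k j - n j * k i) := by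
    intro i
    split_ifs with h
    · apply Finset.single_le_sum (f := fun j => n i * k j - n j * k i)
      · intro j hj
        have := hcross i j (Finset.mem_filter.mp hj).2
        linarith
      · exact Finset.mem_filter.mpr ⟨Finset.mem_univ _, h⟩
    · apply Finset.sum_nonneg
      intro j hj
      have := hcross i j (Finset.mem_filter.mp hj).2
      linarith
  have hmain : ∑ i : Fin r, (if i0 < i then n i * k i0 - n i0 * k i else 0)
      ≤ ∑ i : Fin r, ∑ j ∈ Finset.univ.filter (fun j => j < i),
        (n i * k j - n j * k i) :=
    Finset.sum_le_sum (fun i _ => hlb i)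
  have hfe : (Finset.univ.filter (fun i => i0 < i)) = Finset.univ.erase i0 := by
    ext i
    simp only [Finset.mem_filter, Finset.mem_erase, Finset.mem_univ, true_and, and_true]
    exact ⟨fun h => h.ne', hne i⟩
  rw [← Finset.sum_filter, hfe] at hmain
  have hcalc : ∑ i ∈ Finset.univ.erase i0, (n i * k i0 - n i0 * k i) = N * k i0 := by
    rw [Finset.sum_sub_distrib, ← Finset.sum_mul, ← Finset.mul_sum,
      hsum_erase_n, hsum_erase_k]
    ring
  rw [hcalc] at hmain
  nlinarith
end

section
/- Let n > 1, let g ≥ 0, and define for each admissible sequence μ = ((n_1,k_1),...,(n_r,k_r)) of total rank n and total Chern class 0 with r ≥ 2 the quantity c(μ) = ∑_{i>j}(n_i k_j − n_j k_i) + (g−1)·∑_{i>j} n_i n_j. If g ≥ 1, then c(μ) ≥ n + (n−1)(g−1), and this bound is attained by the sequence ((1,1),(n−1,−1)). -/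
/-- Lemma 4.3 in full: for genus `g ≥ 1`, the codimension
`c(μ) = ∑_{i>j}(n_i k_j - n_j k_i) + (g-1) ∑_{i>j} n_i n_j` of any non-semistable
Harder–Narasimhan stratum satisfies `c(μ) ≥ N + (N-1)(g-1)`, and this bound is
attained by the admissible sequence `((1,1),(N-1,-1))`. -/
theorem stmt4 (N : ℤ) (hN : 1 < N) (g : ℤ) (hg : 1 ≤ g) :
    (∀ (r : ℕ), 2 ≤ r → ∀ n k : Fin r → ℤ,
      (∀ i, 0 < n i) → (∑ i, n i = N) → (∑ i, k i = 0) →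
      StrictAnti (fun i : Fin r => (k i : ℚ) / (n i : ℚ)) →
      N + (N - 1) * (g - 1) ≤
        (∑ i : Fin r, ∑ j ∈ Finset.univ.filter (fun j => j < i),
            (n i * k j - n j * k i)) +
          (g - 1) * ∑ i : Fin r, ∑ j ∈ Finset.univ.filter (fun j => j < i), n i * n j) ∧
    ((∀ i, 0 < (![1, N - 1] : Fin 2 → ℤ) i) ∧
      (∑ i, (![1, N - 1] : Fin 2 → ℤ) i = N) ∧
      (∑ i, (![1, -1] : Fin 2 → ℤ) i = 0) ∧
      StrictAnti (fun i : Fin 2 =>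
        ((![1, -1] : Fin 2 → ℤ) i : ℚ) / ((![1, N - 1] : Fin 2 → ℤ) i : ℚ)) ∧
      (∑ i : Fin 2, ∑ j ∈ Finset.univ.filter (fun j => j < i),
          ((![1, N - 1] : Fin 2 → ℤ) i * (![1, -1] : Fin 2 → ℤ) j -
            (![1, N - 1] : Fin 2 → ℤ) j * (![1, -1] : Fin 2 → ℤ) i)) +
        (g - 1) * ∑ i : Fin 2, ∑ j ∈ Finset.univ.filter (fun j => j < i),
            (![1, N - 1] : Fin 2 → ℤ) i * (![1, N - 1] : Fin 2 → ℤ) j =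
        N + (N - 1) * (g - 1)) := by
  constructor
  · intro r hr n k hn hsn hsk hsa
    have hrpos : 0 < r := by omega
    set L : Fin r := ⟨r - 1, by omega⟩ with hLdef
    have hLlt : ∀ j : Fin r, j ≠ L → j < L := by
      intro j hj
      have h1 := j.isLt
      rw [Fin.lt_def]
      rw [Ne, Fin.ext_iff] at hj
      simp only [hLdef] at *
      omega
    have hD : ∀ i j : Fin r, j < i → 1 ≤ n i * k j - n j * k i := by
      intro i j hji
      have h := hsa hji
      simp only at h
      rw [div_lt_div_iff₀ (by exact_mod_cast hn i) (by exact_mod_cast hn j)] at h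
      have h2 : (n j : ℚ) * k i < (n i : ℚ) * k j := by linarith
      have h3 : n j * k i < n i * k j := by exact_mod_cast h2
      omega
    have hfil : Finset.univ.filter (fun j => j < L) = Finset.univ.erase L := by
      ext j
      have h1 := j.isLt
      simp only [Finset.mem_filter, Finset.mem_univ, true_and, Finset.mem_erase, and_true,
        Fin.lt_def, Ne, Fin.ext_iff, hLdef]
      omega
    have hkL : ∑ j ∈ Finset.univ.erase L, k j = -(k L) := by
      have h := Finset.sum_erase_add Finset.univ k (Finset.mem_univ L)
      rw [hsk] at h; linarith
    have hnL : ∑ j ∈ Finset.univ.erase L, n j = N - n L := by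
      have h := Finset.sum_erase_add Finset.univ n (Finset.mem_univ L)
      rw [hsn] at h; linarith
    have hj0 : (⟨0, by omega⟩ : Fin r) ≠ L := by
      simp only [hLdef, Ne, Fin.mk.injEq]; omega
    -- the inner sum at L for the first double sum
    have hfL : ∑ j ∈ Finset.univ.filter (fun j => j < L), (n L * k j - n j * k L)
        = -(N * k L) := by
      rw [hfil, Finset.sum_sub_distrib, ← Finset.mul_sum, ← Finset.sum_mul, hkL, hnL]; ring
    have hone : (1 : ℤ) ≤ -(N * k L) := by
      rw [← hfL]
      calc (1 : ℤ) ≤ n L * k ⟨0, by omega⟩ - n ⟨0, by omega⟩ * k L :=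
            hD L _ (hLlt _ hj0)
        _ ≤ _ := by
            rw [hfil]
            have hnn : ∀ j ∈ Finset.univ.erase L, (0:ℤ) ≤ n L * k j - n j * k L := by
              intro j hj
              have := hD L j (hLlt j (Finset.mem_erase.1 hj).1); linarith
            exact Finset.single_le_sum (f := fun j => n L * k j - n j * k L) hnn
              (Finset.mem_erase.2 ⟨hj0, Finset.mem_univ _⟩)
    have hkLneg : k L ≤ -1 := by nlinarith
    have hP : N ≤ ∑ i : Fin r, ∑ j ∈ Finset.univ.filter (fun j => j < i),
        (n i * k j - n j * k i) := by
      have h2 : ∀ i : Fin r, (0:ℤ) ≤ ∑ j ∈ Finset.univ.filter (fun j => j < i),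
          (n i * k j - n j * k i) := fun i =>
        Finset.sum_nonneg fun j hj => by
          have := hD i j (Finset.mem_filter.1 hj).2; omega
      have h3 := Finset.single_le_sum (f := fun i => ∑ j ∈ Finset.univ.filter (fun j => j < i),
          (n i * k j - n j * k i)) (fun i _ => h2 i) (Finset.mem_univ L)
      beta_reduce at h3
      rw [hfL] at h3
      nlinarith
    have hQ : N - 1 ≤ ∑ i : Fin r, ∑ j ∈ Finset.univ.filter (fun j => j < i), n i * n j := by
      have h2 : ∀ i : Fin r, (0:ℤ) ≤ ∑ j ∈ Finset.univ.filter (fun j => j < i), n i * n j :=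
        fun i => Finset.sum_nonneg fun j _ =>
          mul_nonneg (hn i).le (hn j).le
      have h3 := Finset.single_le_sum (f := fun i => ∑ j ∈ Finset.univ.filter (fun j => j < i),
          n i * n j) (fun i _ => h2 i) (Finset.mem_univ L)
      have hgL : ∑ j ∈ Finset.univ.filter (fun j => j < L), n L * n j = n L * (N - n L) := by
        rw [hfil, ← Finset.mul_sum, hnL]
      beta_reduce at h3
      rw [hgL] at h3
      have hnLN : n L ≤ N - 1 := by
        have h4 : (1:ℤ) ≤ ∑ j ∈ Finset.univ.erase L, n j := by
          calc (1:ℤ) ≤ n ⟨0, by omega⟩ := hn _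
            _ ≤ _ := Finset.single_le_sum (fun j _ => (hn j).le)
                (Finset.mem_erase.2 ⟨hj0, Finset.mem_univ _⟩)
        omega
      nlinarith [hn L]
    nlinarith [mul_nonneg (by linarith : (0:ℤ) ≤ g - 1) (by linarith : (0:ℤ) ≤
      (∑ i : Fin r, ∑ j ∈ Finset.univ.filter (fun j => j < i), n i * n j) - (N - 1))]
  · have hfil0 : (Finset.univ.filter (fun j => j < (0 : Fin 2))) = ∅ := by decide
    have hfil1 : (Finset.univ.filter (fun j => j < (1 : Fin 2))) = {0} := by decide
    refine ⟨?_, ?_, ?_, ?_, ?_⟩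
    · intro i; fin_cases i <;> simp <;> omega
    · simp [Fin.sum_univ_two]
    · simp [Fin.sum_univ_two]
    · intro a b hab
      fin_cases a <;> fin_cases b
      · exact absurd hab (by decide)
      · simp only [Matrix.cons_val_zero, Matrix.cons_val_one, Matrix.head_cons, Fin.mk_one,
          Fin.zero_eta]
        push_cast
        have h1 : (1:ℚ) < (N:ℚ) := by exact_mod_cast hN
        have h2 : (-1 : ℚ) / ((N:ℚ) - 1) < 0 := div_neg_of_neg_of_pos (by norm_num) (by linarith)
        calc (-1 : ℚ) / ((N:ℚ) - 1) < 0 := h2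
          _ < 1 / 1 := by norm_num
      · exact absurd hab (by decide)
      · exact absurd hab (by decide)
    · rw [Fin.sum_univ_two, Fin.sum_univ_two, hfil0, hfil1]
      simp
      ring
end
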